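/- arXiv:math/0703278 — 2 statements merged into one kernel-verified Lean document; each statement's English description precedes it below -/
import Mathlib

section
/- Let n ≥ 3 be an integer. The group given by the presentation with generators v_1, …, v_{n-2} and relations v_i^3 = 1 for all 1 ≤ i ≤ n-2 and (v_i·v_j)^2 = 1 for all 1 ≤ i, j ≤ n-2 with i ≠ j, is isomorphic to the alternating group A_n on n letters. -/
/-- Carmichael's relators for the alternating group: generators `v_1, …, v_{n-2}`
(represented by `Fin (n-2)`), with relations `vᵢ³ = 1` and `(vᵢ·vⱼ)² = 1` for `i ≠ j`. -/
def carmichaelRels (n : ℕ) : Set (FreeGroup (Fin (n - 2))) :=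
  { r | (∃ i : Fin (n - 2), r = (FreeGroup.of i) ^ 3) ∨
        (∃ i j : Fin (n - 2), i ≠ j ∧ r = (FreeGroup.of i * FreeGroup.of j) ^ 2) }

namespace CarAux
open Equiv Equiv.Perm Subgroup
open scoped Nat

section Perm
variable {α : Type*} [DecidableEq α]


variable {α : Type*} [DecidableEq α]

lemma pow3 {x a b : α} (h1 : x ≠ a) (h2 : x ≠ b) (h3 : a ≠ b) :
    (swap x a * swap a b) ^ 3 = 1 := by
  have h1' := h1.symm; have h2' := h2.symm; have h3' := h3.symm
  ext w
  by_cases hx : w = x <;> by_cases ha : w = a <;> by_cases hb : w = b <;>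
    simp_all [mul_apply, pow_succ, swap_apply_of_ne_of_ne, swap_apply_left, swap_apply_right]

lemma pairsq {x y a b : α} (hxy : x ≠ y) (hxa : x ≠ a) (hxb : x ≠ b) (hya : y ≠ a)
    (hyb : y ≠ b) (hab : a ≠ b) :
    ((swap x a * swap a b) * (swap y a * swap a b)) ^ 2 = 1 := by
  have := hxy.symm; have := hxa.symm; have := hxb.symm; have := hya.symm
  have := hyb.symm; have := hab.symm
  ext w
  by_cases hx : w = x <;> by_cases hy : w = y <;> by_cases ha : w = a <;> by_cases hb : w = b <;>
    simp_all [mul_apply, pow_succ, swap_apply_of_ne_of_ne, swap_apply_left, swap_apply_right]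

lemma cyc_rot {x y z : α} (hxy : x ≠ y) (hxz : x ≠ z) (hyz : y ≠ z) :
    swap x y * swap y z = swap y z * swap z x := by
  have := hxy.symm; have := hxz.symm; have := hyz.symm
  ext w
  by_cases hx : w = x <;> by_cases hy : w = y <;> by_cases hz : w = z <;>
    simp_all [mul_apply, swap_apply_of_ne_of_ne, swap_apply_left, swap_apply_right]

lemma idE {z a b : α} (hza : z ≠ a) (hzb : z ≠ b) (hab : a ≠ b) :
    swap b a * swap a z = (swap z a * swap a b) ^ 2 := by
  have := hza.symm; have := hzb.symm; have := hab.symm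
  ext w
  by_cases hz : w = z <;> by_cases ha : w = a <;> by_cases hb : w = b <;>
    simp_all [mul_apply, pow_succ, swap_apply_of_ne_of_ne, swap_apply_left, swap_apply_right]

lemma idB {x z a b : α} (hxz : x ≠ z) (hxa : x ≠ a) (hxb : x ≠ b) (hza : z ≠ a)
    (hzb : z ≠ b) (hab : a ≠ b) :
    swap x a * swap a z = (swap x a * swap a b) * (swap z a * swap a b) ^ 2 := by
  have := hxz.symm; have := hxa.symm; have := hxb.symm; have := hza.symm
  have := hzb.symm; have := hab.symm
  ext w
  by_cases hx : w = x <;> by_cases hz : w = z <;> by_cases ha : w = a <;> by_cases hb : w = b <;>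
    simp_all [mul_apply, pow_succ, swap_apply_of_ne_of_ne, swap_apply_left, swap_apply_right]

lemma idC {x z a b : α} (hxz : x ≠ z) (hxa : x ≠ a) (hxb : x ≠ b) (hza : z ≠ a)
    (hzb : z ≠ b) (hab : a ≠ b) :
    swap x b * swap b z = (swap x a * swap a b) ^ 2 * (swap z a * swap a b) := by
  have := hxz.symm; have := hxa.symm; have := hxb.symm; have := hza.symm
  have := hzb.symm; have := hab.symm
  ext w
  by_cases hx : w = x <;> by_cases hz : w = z <;> by_cases ha : w = a <;> by_cases hb : w = b <;>
    simp_all [mul_apply, pow_succ, swap_apply_of_ne_of_ne, swap_apply_left, swap_apply_right]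

lemma idA {x y z a b : α} (hxy : x ≠ y) (hxz : x ≠ z) (hyz : y ≠ z) (hxa : x ≠ a) (hxb : x ≠ b)
    (hya : y ≠ a) (hyb : y ≠ b) (hza : z ≠ a) (hzb : z ≠ b) (hab : a ≠ b) :
    swap x y * swap y z =
      ((swap z a * swap a b) * (swap y a * swap a b) ^ 2) *
        ((swap x a * swap a b) * (swap z a * swap a b) ^ 2) := by
  have := hxy.symm; have := hxz.symm; have := hyz.symm; have := hxa.symm; have := hxb.symm
  have := hya.symm; have := hyb.symm; have := hza.symm; have := hzb.symm; have := hab.symm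
  ext w
  by_cases hx : w = x <;> by_cases hy : w = y <;> by_cases hz : w = z <;> by_cases ha : w = a <;>
    by_cases hb : w = b <;>
    simp_all [mul_apply, pow_succ, swap_apply_of_ne_of_ne, swap_apply_left, swap_apply_right]

lemma tc_mem {a b : α} {u : α} (hua : u ≠ a) (hub : u ≠ b) :
    swap u a * swap a b ∈
      closure {σ : Perm α | ∃ u, u ≠ a ∧ u ≠ b ∧ σ = swap u a * swap a b} :=
  subset_closure ⟨u, hua, hub, rfl⟩

lemma case_mid_a {a b : α} (hab : a ≠ b) {x z : α} (hxa : x ≠ a) (hza : z ≠ a) (hxz : x ≠ z) :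
    swap x a * swap a z ∈
      closure {σ : Perm α | ∃ u, u ≠ a ∧ u ≠ b ∧ σ = swap u a * swap a b} := by
  by_cases hxb : x = b
  · subst hxb
    rw [idE hza (hxz.symm) hab]
    exact pow_mem (tc_mem hza hxz.symm) 2
  · by_cases hzb : z = b
    · subst hzb
      exact tc_mem hxa hxb
    · rw [idB hxz hxa hxb hza hzb hab]
      exact mul_mem (tc_mem hxa hxb) (pow_mem (tc_mem hza hzb) 2)

lemma threeCycle_mem (a b : α) (hab : a ≠ b) (x y z : α) (hxy : x ≠ y) (hxz : x ≠ z)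
    (hyz : y ≠ z) :
    swap x y * swap y z ∈
      closure {σ : Perm α | ∃ u, u ≠ a ∧ u ≠ b ∧ σ = swap u a * swap a b} := by
  by_cases hya : y = a
  · subst hya; exact case_mid_a hab hxy hyz.symm hxz
  · by_cases hxa : x = a
    · subst hxa
      rw [cyc_rot hxy hxz hyz, cyc_rot hyz hxy.symm hxz.symm]
      exact case_mid_a hab hxz.symm (fun h => hya h) (fun h => hyz h.symm)
    · by_cases hza : z = a
      · subst hza
        rw [cyc_rot hxy hxz hyz]
        exact case_mid_a hab hyz (fun h => hxa h) hxy.symm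
      · by_cases hyb : y = b
        · subst hyb
          rw [idC hxz hxa hxy hza hyz.symm hab]
          exact mul_mem (pow_mem (tc_mem hxa hxy) 2) (tc_mem hza hyz.symm)
        · by_cases hxb : x = b
          · subst hxb
            rw [cyc_rot hxy hxz hyz, cyc_rot hyz hxy.symm hxz.symm]
            rw [idC hyz.symm hza hxz.symm hya hxy.symm hab]
            exact mul_mem (pow_mem (tc_mem hza hxz.symm) 2) (tc_mem hya hxy.symm)
          · by_cases hzb : z = b
            · subst hzb
              rw [cyc_rot hxy hxz hyz]
              rw [idC hxy.symm hya hyz hxa hxz hab]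
              exact mul_mem (pow_mem (tc_mem hya hyz) 2) (tc_mem hxa hxz)
            · rw [idA hxy hxz hyz hxa hxb hya hyb hza hzb hab]
              exact mul_mem (mul_mem (tc_mem hza hzb) (pow_mem (tc_mem hya hyb) 2))
                (mul_mem (tc_mem hxa hxb) (pow_mem (tc_mem hza hzb) 2))

lemma isThreeCycle_decomp [Fintype α] {σ : Perm α} (h : IsThreeCycle σ) :
    ∃ x y z, x ≠ y ∧ x ≠ z ∧ y ≠ z ∧ σ = swap x y * swap y z := by
  obtain ⟨x, hx, -⟩ := h.isCycle
  have h3 : σ ^ 3 = 1 := by rw [← h.orderOf]; exact pow_orderOf_eq_one σ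
  have hzx : σ (σ (σ x)) = x := by
    have := congrArg (fun τ : Perm α => τ x) h3
    simpa [mul_apply, pow_succ] using this
  have hxy : x ≠ σ x := Ne.symm hx
  have hxz : x ≠ σ (σ x) := by
    intro hcon
    apply hx
    have h2 : σ x = σ (σ (σ x)) := congrArg σ hcon
    rw [hzx] at h2
    exact h2
  have hyz : σ x ≠ σ (σ x) := fun hcon => hx ((σ.injective hcon).symm)
  refine ⟨x, σ x, σ (σ x), hxy, hxz, hyz, ?_⟩
  have hsub : {x, σ x, σ (σ x)} ⊆ σ.support := by
    intro w hw
    simp only [Finset.mem_insert, Finset.mem_singleton] at hw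
    rcases hw with rfl | rfl | rfl
    · exact mem_support.2 hx
    · exact mem_support.2 fun hc => hx (σ.injective hc)
    · exact mem_support.2 fun hc => hyz (σ.injective hc).symm
  have hsupp : σ.support = {x, σ x, σ (σ x)} := by
    refine (Finset.eq_of_subset_of_card_le hsub ?_).symm
    rw [h.card_support]
    rw [Finset.card_insert_of_notMem (by simp [hxy, hxz]),
      Finset.card_insert_of_notMem (by simp [hyz]), Finset.card_singleton]
  ext w
  by_cases h1 : w = x
  · subst h1
    rw [mul_apply, swap_apply_of_ne_of_ne hxy hxz, swap_apply_left]
  · by_cases h2 : w = σ x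
    · subst h2
      rw [mul_apply, swap_apply_left, swap_apply_of_ne_of_ne hxz.symm hyz.symm]
    · by_cases h3' : w = σ (σ x)
      · subst h3'
        rw [mul_apply, swap_apply_right, swap_apply_right, hzx]
      · have hw : w ∉ σ.support := by
          rw [hsupp]; simp [h1, h2, h3']
        rw [mul_apply, swap_apply_of_ne_of_ne h2 h3', swap_apply_of_ne_of_ne h1 h2,
          notMem_support.1 hw]

lemma closure_tc_eq_alternating [Fintype α] (a b : α) (hab : a ≠ b) :
    closure {σ : Perm α | ∃ u, u ≠ a ∧ u ≠ b ∧ σ = swap u a * swap a b} =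
      alternatingGroup α := by
  apply le_antisymm
  · rw [closure_le]
    rintro σ ⟨u, hua, hub, rfl⟩
    simp [mem_alternatingGroup, sign_swap, hua, hab]
  · rw [← closure_three_cycles_eq_alternating, closure_le]
    intro σ hσ
    obtain ⟨x, y, z, hxy, hxz, hyz, rfl⟩ := isThreeCycle_decomp hσ
    exact threeCycle_mem a b hab x y z hxy hxz hyz

end Perm

section GroupIds
variable {M : Type*} [Group M]

lemma inv_eq_sq {b : M} (hb : b ^ 3 = 1) : b⁻¹ = b ^ 2 := by
  have : b ^ 2 * b = 1 := by rw [← pow_succ, hb]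
  exact inv_eq_of_mul_eq_one_left this

lemma gE1 {a b : M} (hb : b ^ 3 = 1) (hab : a * b * a * b = 1) : a * b * a = b ^ 2 := by
  have h1 : a * b * a * b = b⁻¹ * b := by rw [hab, inv_mul_cancel]
  have h2 : a * b * a = b⁻¹ := mul_right_cancel h1
  rw [h2, inv_eq_sq hb]

lemma gE2 {a b : M} (ha : a ^ 3 = 1) (hb : b ^ 3 = 1) (hab : a * b * a * b = 1)
    (hba : b * a * b * a = 1) : b ^ 2 * a ^ 2 * b ^ 2 = a := by
  rw [← gE1 hb hab]
  calc (a * b * a) * a ^ 2 * (a * b * a) = a * b * a ^ 3 * (a * b * a) := by group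
    _ = a * (b * a * b * a) := by rw [ha]; group
    _ = a := by rw [hba, mul_one]

lemma gE3 {a b : M} (ha : a ^ 3 = 1) (hb : b ^ 3 = 1) (hab : a * b * a * b = 1)
    (hba : b * a * b * a = 1) : b * a ^ 2 * b * a * b ^ 2 = a ^ 2 := by
  calc b * a ^ 2 * b * a * b ^ 2 = b * a * (a * b * a) * b ^ 2 := by
        simp only [pow_two, pow_succ, pow_zero, one_mul, mul_assoc]
    _ = b * a * b ^ 2 * b ^ 2 := by rw [gE1 hb hab]
    _ = b * a * b * b ^ 3 := by group
    _ = b * a * b := by rw [hb, mul_one]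
    _ = a ^ 2 := gE1 ha hba

lemma gE4 {a b c : M} (ha : a ^ 3 = 1) (hb : b ^ 3 = 1) (hc : c ^ 3 = 1)
    (hba : b * a * b * a = 1) (hcb : c * b * c * b = 1) (hca : c * a * c * a = 1) :
    c * a ^ 2 * b * a * c ^ 2 = a ^ 2 * b := by
  have h1 : b * a = a ^ 2 * b ^ 2 := by
    have : b * a * (b * a) = 1 := by rw [← mul_assoc]; exact hba
    have h2 : b * a = (b * a)⁻¹ := by
      rw [eq_inv_iff_mul_eq_one]; exact this
    rw [h2, mul_inv_rev, inv_eq_sq ha, inv_eq_sq hb]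
  have h2 : b ^ 2 * c ^ 2 = c * b := by
    have h3 : c * b * (c * b) = 1 := by rw [← mul_assoc]; exact hcb
    have h4 : c * b = (c * b)⁻¹ := by rw [eq_inv_iff_mul_eq_one]; exact h3
    rw [h4, mul_inv_rev, inv_eq_sq hb, inv_eq_sq hc]
  calc c * a ^ 2 * b * a * c ^ 2 = c * (a ^ 2 * (b * a)) * c ^ 2 := by group
    _ = c * (a ^ 2 * (a ^ 2 * b ^ 2)) * c ^ 2 := by rw [h1]
    _ = c * a * a ^ 3 * (b ^ 2 * c ^ 2) := by group
    _ = c * a * a ^ 3 * (c * b) := by rw [h2]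
    _ = (c * a * c) * b := by rw [ha]; group
    _ = a ^ 2 * b := by rw [gE1 ha hca]

end GroupIds

section Rels
variable {α : Type*} {rels : Set (FreeGroup α)}

lemma relator_one {r : FreeGroup α} (h : r ∈ rels) : PresentedGroup.mk rels r = 1 :=
  (QuotientGroup.eq_one_iff r).2 (Subgroup.subset_normalClosure h)

end Rels

variable {n : ℕ}

lemma cube (i : Fin (n - 2)) : (PresentedGroup.of i : PresentedGroup (carmichaelRels n)) ^ 3 = 1 := by
  have : ((PresentedGroup.mk (carmichaelRels n)) (FreeGroup.of i ^ 3)) = 1 :=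
    relator_one (Or.inl ⟨i, rfl⟩)
  rwa [map_pow] at this

lemma pair {i j : Fin (n - 2)} (h : i ≠ j) :
    (PresentedGroup.of i : PresentedGroup (carmichaelRels n)) * PresentedGroup.of j *
      PresentedGroup.of i * PresentedGroup.of j = 1 := by
  have : ((PresentedGroup.mk (carmichaelRels n)) ((FreeGroup.of i * FreeGroup.of j) ^ 2)) = 1 :=
    relator_one (Or.inr ⟨i, j, h, rfl⟩)
  rw [map_pow, map_mul] at this
  have h2 : ((PresentedGroup.of i : PresentedGroup (carmichaelRels n)) * PresentedGroup.of j) *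
      (PresentedGroup.of i * PresentedGroup.of j) = 1 := by
    rw [← pow_two]; exact this
  rw [← mul_assoc] at h2
  exact h2


lemma sq_inv {M : Type*} [Group M] {b : M} (hb : b ^ 3 = 1) : (b ^ 2)⁻¹ = b := by
  have : b * b ^ 2 = 1 := by rw [← pow_succ']; exact hb
  exact inv_eq_of_mul_eq_one_left this

variable {n : ℕ}
abbrev Gn (m : ℕ) := PresentedGroup (carmichaelRels m)

section Step
variable (n : ℕ) (hn : 4 ≤ n)

def vv : Gn n := PresentedGroup.of (⟨n - 3, by omega⟩ : Fin (n - 2))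

def Hsub : Subgroup (Gn n) :=
  closure (Set.range fun i : Fin (n - 1 - 2) =>
    (PresentedGroup.of (Fin.castLE (by omega) i) : Gn n))

lemma of_mem_H (j : Fin (n - 2)) (hj : (j : ℕ) < n - 3) :
    (PresentedGroup.of j : Gn n) ∈ Hsub n hn := by
  apply Subgroup.subset_closure
  exact ⟨⟨(j : ℕ), by omega⟩, by congr 1⟩

def rep (x : Fin n) : Gn n :=
  if h : (x : ℕ) < n - 3 then
    PresentedGroup.of (⟨(x : ℕ), by omega⟩ : Fin (n - 2)) * vv n hn ^ 2
  else if (x : ℕ) = n - 3 then 1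
  else if (x : ℕ) = n - 2 then vv n hn
  else vv n hn ^ 2

lemma rep_small (x : Fin n) (h : (x : ℕ) < n - 3) :
    rep n hn x = PresentedGroup.of (⟨(x : ℕ), by omega⟩ : Fin (n - 2)) * vv n hn ^ 2 := by
  simp only [rep]; rw [dif_pos h]

lemma rep_p (x : Fin n) (h : (x : ℕ) = n - 3) : rep n hn x = 1 := by
  simp only [rep]; rw [dif_neg (by omega), if_pos h]

lemma rep_a (x : Fin n) (h : (x : ℕ) = n - 2) : rep n hn x = vv n hn := by
  simp only [rep]; rw [dif_neg (by omega), if_neg (by omega), if_pos h]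

lemma rep_b (x : Fin n) (h : (x : ℕ) = n - 1) : rep n hn x = vv n hn ^ 2 := by
  simp only [rep]; rw [dif_neg (by omega), if_neg (by omega), if_neg (by omega)]

lemma gen_step (j : Fin (n - 2)) (x : Fin n) :
    ∃ y : Fin n, (rep n hn y)⁻¹ * (PresentedGroup.of j * rep n hn x) ∈ Hsub n hn := by
  have hjlt := j.isLt
  have hxlt := x.isLt
  have hv3 : vv n hn ^ 3 = 1 := cube _
  by_cases hj : (j : ℕ) < n - 3
  · have hjlast : j ≠ (⟨n - 3, by omega⟩ : Fin (n - 2)) := by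
      intro hcon; apply absurd (congrArg Fin.val hcon); simp; omega
    have hjv : PresentedGroup.of j * vv n hn * PresentedGroup.of j * vv n hn = 1 := pair hjlast
    have hvj : vv n hn * PresentedGroup.of j * vv n hn * PresentedGroup.of j = 1 :=
      pair hjlast.symm
    have hj3 : (PresentedGroup.of j : Gn n) ^ 3 = 1 := cube j
    by_cases hx : (x : ℕ) < n - 3
    · by_cases hxj : (x : ℕ) = (j : ℕ)
      · refine ⟨⟨n - 2, by omega⟩, ?_⟩
        rw [rep_small n hn x hx, rep_a n hn ⟨n - 2, by omega⟩ rfl]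
        have hxj' : (⟨(x : ℕ), by omega⟩ : Fin (n - 2)) = j := Fin.ext hxj
        rw [hxj']
        have key : (vv n hn)⁻¹ *
            (PresentedGroup.of j * (PresentedGroup.of j * vv n hn ^ 2)) =
            vv n hn ^ 2 * PresentedGroup.of j ^ 2 * vv n hn ^ 2 := by
          rw [inv_eq_sq hv3]; simp only [pow_two, mul_assoc]
        rw [key, gE2 hj3 hv3 hjv hvj]
        exact of_mem_H n hn j hj
      · refine ⟨x, ?_⟩
        rw [rep_small n hn x hx]
        set s := (PresentedGroup.of (⟨(x : ℕ), by omega⟩ : Fin (n - 2)) : Gn n) with hs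
        have hsj : (⟨(x : ℕ), by omega⟩ : Fin (n - 2)) ≠ j := fun hc => hxj (congrArg Fin.val hc)
        have hslast : (⟨(x : ℕ), by omega⟩ : Fin (n - 2)) ≠ (⟨n - 3, by omega⟩ : Fin (n - 2)) := by
          intro hcon; apply absurd (congrArg Fin.val hcon); simp; omega
        have hs3 : s ^ 3 = 1 := cube _
        have hjs : PresentedGroup.of j * s * PresentedGroup.of j * s = 1 := pair hsj.symm
        have hvs : vv n hn * s * vv n hn * s = 1 := pair hslast.symm
        have key : (s * vv n hn ^ 2)⁻¹ * (PresentedGroup.of j * (s * vv n hn ^ 2)) =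
            vv n hn * s ^ 2 * PresentedGroup.of j * s * vv n hn ^ 2 := by
          rw [mul_inv_rev, inv_eq_sq hs3, sq_inv hv3]; simp only [pow_two, mul_assoc]
        rw [key, gE4 hs3 hj3 hv3 hjs hvj hvs]
        exact mul_mem (pow_mem (of_mem_H n hn _ (by simpa using hx)) 2) (of_mem_H n hn j hj)
    · by_cases hxp : (x : ℕ) = n - 3
      · refine ⟨x, ?_⟩
        rw [rep_p n hn x hxp]
        have key : (1 : Gn n)⁻¹ * (PresentedGroup.of j * 1) = PresentedGroup.of j := by
          rw [inv_one, one_mul, mul_one]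
        rw [key]
        exact of_mem_H n hn j hj
      · by_cases hxa : (x : ℕ) = n - 2
        · refine ⟨⟨n - 1, by omega⟩, ?_⟩
          rw [rep_a n hn x hxa, rep_b n hn ⟨n - 1, by omega⟩ rfl]
          have key : (vv n hn ^ 2)⁻¹ * (PresentedGroup.of j * vv n hn) =
              vv n hn * PresentedGroup.of j * vv n hn := by
            rw [sq_inv hv3, mul_assoc]
          rw [key, gE1 hj3 hvj]
          exact pow_mem (of_mem_H n hn j hj) 2
        · refine ⟨⟨(j : ℕ), by omega⟩, ?_⟩
          rw [rep_b n hn x (by omega), rep_small n hn ⟨(j : ℕ), by omega⟩ (show ((⟨(j : ℕ), by omega⟩ : Fin n) : ℕ) < n - 3 from hj)]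
          have hjj : (⟨((⟨(j : ℕ), by omega⟩ : Fin n) : ℕ), Nat.lt_of_lt_of_le hj (by omega)⟩ : Fin (n - 2)) = j :=
            Fin.ext rfl
          rw [hjj, inv_mul_cancel]
          exact one_mem _
  · have hjeq : j = (⟨n - 3, by omega⟩ : Fin (n - 2)) := Fin.ext (show (j : ℕ) = n - 3 by omega)
    have hofv : (PresentedGroup.of j : Gn n) = vv n hn := by rw [hjeq]; rfl
    rw [hofv]
    by_cases hx : (x : ℕ) < n - 3
    · refine ⟨x, ?_⟩
      rw [rep_small n hn x hx]
      set s := (PresentedGroup.of (⟨(x : ℕ), by omega⟩ : Fin (n - 2)) : Gn n) with hs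
      have hslast : (⟨(x : ℕ), by omega⟩ : Fin (n - 2)) ≠ (⟨n - 3, by omega⟩ : Fin (n - 2)) := by
        intro hcon; apply absurd (congrArg Fin.val hcon); simp; omega
      have hs3 : s ^ 3 = 1 := cube _
      have hsv : s * vv n hn * s * vv n hn = 1 := pair hslast
      have hvs : vv n hn * s * vv n hn * s = 1 := pair hslast.symm
      have key : (s * vv n hn ^ 2)⁻¹ * (vv n hn * (s * vv n hn ^ 2)) =
          vv n hn * s ^ 2 * vv n hn * s * vv n hn ^ 2 := by
        rw [mul_inv_rev, inv_eq_sq hs3, sq_inv hv3]; simp only [pow_two, mul_assoc]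
      rw [key, gE3 hs3 hv3 hsv hvs]
      exact pow_mem (of_mem_H n hn _ (by simpa using hx)) 2
    · by_cases hxp : (x : ℕ) = n - 3
      · refine ⟨⟨n - 2, by omega⟩, ?_⟩
        rw [rep_p n hn x hxp, rep_a n hn ⟨n - 2, by omega⟩ rfl, mul_one, inv_mul_cancel]
        exact one_mem _
      · by_cases hxa : (x : ℕ) = n - 2
        · refine ⟨⟨n - 1, by omega⟩, ?_⟩
          rw [rep_a n hn x hxa, rep_b n hn ⟨n - 1, by omega⟩ rfl]
          have key : (vv n hn ^ 2)⁻¹ * (vv n hn * vv n hn) = 1 := by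
            rw [← pow_two, inv_mul_cancel]
          rw [key]; exact one_mem _
        · refine ⟨⟨n - 3, by omega⟩, ?_⟩
          rw [rep_b n hn x (by omega), rep_p n hn ⟨n - 3, by omega⟩ rfl, inv_one, one_mul,
            ← pow_succ', hv3]
          exact one_mem _

lemma FF_surj :
    Function.Surjective
      (fun x : Fin n => (QuotientGroup.mk (rep n hn x) : Gn n ⧸ Hsub n hn)) := by
  set F : Fin n → Gn n ⧸ Hsub n hn := fun x => QuotientGroup.mk (rep n hn x) with hF
  have key : ∀ g : Gn n, ∀ q ∈ Set.range F, g • q ∈ Set.range F := by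
    intro g
    have hg : g ∈ closure (Set.range (PresentedGroup.of : Fin (n - 2) → Gn n)) := by
      rw [PresentedGroup.closure_range_of]; exact Subgroup.mem_top g
    induction hg using Subgroup.closure_induction with
    | mem g' hg' =>
      obtain ⟨j, rfl⟩ := hg'
      rintro q ⟨x, rfl⟩
      obtain ⟨y, hy⟩ := gen_step n hn j x
      refine ⟨y, ?_⟩
      show QuotientGroup.mk (rep n hn y) = PresentedGroup.of j • QuotientGroup.mk (rep n hn x)
      rw [MulAction.Quotient.smul_mk]
      exact QuotientGroup.eq.2 hy
    | one => intro q hq; simpa using hq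
    | mul a b ha hb iha ihb => intro q hq; rw [mul_smul]; exact iha _ (ihb _ hq)
    | inv a ha ih =>
      intro q hq
      have hmt : Set.MapsTo (a • ·) (Set.range F) (Set.range F) := fun z hz => ih z hz
      have hbij := (Set.Finite.injOn_iff_bijOn_of_mapsTo (Set.finite_range F) hmt).1
        (MulAction.injective a).injOn
      obtain ⟨q', hq', hq'eq⟩ := hbij.surjOn hq
      have : a⁻¹ • q = q' := by rw [← hq'eq]; simp
      rw [this]; exact hq'
  intro q
  obtain ⟨g, rfl⟩ := QuotientGroup.mk_surjective q
  have h1 : F ⟨n - 3, by omega⟩ = QuotientGroup.mk 1 := by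
    rw [hF]; simp only; rw [rep_p n hn ⟨n - 3, by omega⟩ rfl]
  have h2 := key g _ ⟨⟨n - 3, by omega⟩, rfl⟩
  rw [h1] at h2
  have h3 : g • (QuotientGroup.mk 1 : Gn n ⧸ Hsub n hn) = QuotientGroup.mk g := by
    rw [MulAction.Quotient.smul_mk, smul_eq_mul, mul_one]
  rw [h3] at h2
  exact h2

end Step

lemma step (n : ℕ) (hn : 4 ≤ n) (hfin : Finite (Gn (n - 1)))
    (hcard : Nat.card (Gn (n - 1)) ≤ (n - 1)! / 2) :
    Finite (Gn n) ∧ Nat.card (Gn n) ≤ n ! / 2 := by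
  have hrels : ∀ r ∈ carmichaelRels (n - 1),
      FreeGroup.lift (fun i : Fin (n - 1 - 2) =>
        (PresentedGroup.of (Fin.castLE (by omega) i) : Gn n)) r = 1 := by
    rintro r (⟨i, rfl⟩ | ⟨i, j, hij, rfl⟩)
    · rw [map_pow, FreeGroup.lift_apply_of]; exact cube _
    · rw [map_pow, map_mul, FreeGroup.lift_apply_of, FreeGroup.lift_apply_of]
      have hne : (Fin.castLE (by omega : n - 1 - 2 ≤ n - 2) i) ≠ Fin.castLE (by omega) j := by
        intro hcon
        have hv := congrArg Fin.val hcon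
        simp only [Fin.coe_castLE] at hv
        exact hij (Fin.ext hv)
      rw [pow_two, ← mul_assoc]
      exact pair hne
  set φp := PresentedGroup.toGroup hrels with hφp
  have hrange : φp.range = Hsub n hn := by
    rw [MonoidHom.range_eq_map, ← PresentedGroup.closure_range_of (carmichaelRels (n - 1)),
      MonoidHom.map_closure, Hsub, ← Set.range_comp]
    congr 1
  have hfinH : Finite (Hsub n hn) := by
    rw [← hrange]
    have : (↑φp.range : Set (Gn n)) = Set.range φp := φp.coe_range
    exact (this ▸ Set.finite_range φp).to_subtype
  have hfinQ : Finite (Gn n ⧸ Hsub n hn) := Finite.of_surjective _ (FF_surj n hn)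
  have hfinG : Finite (Gn n) :=
    Finite.of_equiv _ (Subgroup.groupEquivQuotientProdSubgroup (s := Hsub n hn)).symm
  refine ⟨hfinG, ?_⟩
  have hq : Nat.card (Gn n ⧸ Hsub n hn) ≤ n := by
    have h := Nat.card_le_card_of_surjective _ (FF_surj n hn)
    simpa using h
  have hH : Nat.card (Hsub n hn) ≤ (n - 1)! / 2 := by
    rw [← hrange]
    calc Nat.card φp.range ≤ Nat.card (Gn (n - 1)) :=
          Nat.card_le_card_of_surjective φp.rangeRestrict φp.rangeRestrict_surjective
      _ ≤ (n - 1)! / 2 := hcard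
  have hmain : Nat.card (Gn n) = Nat.card (Gn n ⧸ Hsub n hn) * Nat.card (Hsub n hn) :=
    Subgroup.card_eq_card_quotient_mul_card_subgroup _
  have h2fac : 2 ∣ (n - 1)! := Nat.dvd_factorial (by omega) (by omega)
  have hfact : n ! = n * (n - 1)! := by
    conv_lhs => rw [show n = (n - 1) + 1 by omega]
    rw [Nat.factorial_succ, show (n - 1) + 1 = n by omega]
  calc Nat.card (Gn n) = Nat.card (Gn n ⧸ Hsub n hn) * Nat.card (Hsub n hn) := hmain
    _ ≤ n * ((n - 1)! / 2) := Nat.mul_le_mul hq hH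
    _ = n ! / 2 := by rw [← Nat.mul_div_assoc n h2fac, ← hfact]

lemma base : Finite (Gn 3) ∧ Nat.card (Gn 3) ≤ 3 := by
  set g : Gn 3 := PresentedGroup.of (⟨0, by omega⟩ : Fin (3 - 2)) with hg
  have hg3 : g ^ 3 = 1 := cube _
  have hford : IsOfFinOrder g := isOfFinOrder_iff_pow_eq_one.2 ⟨3, by norm_num, hg3⟩
  have htop : Subgroup.zpowers g = ⊤ := by
    rw [eq_top_iff, ← PresentedGroup.closure_range_of (carmichaelRels 3)]
    apply Subgroup.closure_le _ |>.2
    rintro _ ⟨i, rfl⟩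
    have : i = (⟨0, by omega⟩ : Fin (3 - 2)) := Fin.ext (by omega)
    rw [this]
    exact Subgroup.mem_zpowers g
  have hfing : Finite (Gn 3) := by
    have h1 : ((Subgroup.zpowers g : Subgroup (Gn 3)) : Set (Gn 3)).Finite :=
      hford.finite_zpowers
    rw [htop, Subgroup.coe_top] at h1
    exact Set.finite_univ_iff.mp h1
  refine ⟨hfing, ?_⟩
  have hcard1 : Nat.card (Gn 3) = Nat.card (⊤ : Subgroup (Gn 3)) :=
    (Nat.card_congr Subgroup.topEquiv.toEquiv).symm
  rw [hcard1, ← htop, Nat.card_zpowers]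
  exact Nat.le_of_dvd (by norm_num) (orderOf_dvd_of_pow_eq_one hg3)



lemma finite_and_card (n : ℕ) (hn : 3 ≤ n) :
    Finite (Gn n) ∧ Nat.card (Gn n) ≤ n ! / 2 := by
  induction n, hn using Nat.le_induction with
  | base =>
    obtain ⟨h1, h2⟩ := base
    exact ⟨h1, by simpa [Nat.factorial] using h2⟩
  | succ n hn IH =>
    exact step (n + 1) (by omega) IH.1 IH.2

section Main
open Equiv Equiv.Perm Subgroup

set_option maxHeartbeats 2000000 in
theorem main (n : ℕ) (hn : 3 ≤ n) :
    Nonempty (PresentedGroup (carmichaelRels n) ≃* alternatingGroup (Fin n)) := by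
  classical
  set a : Fin n := ⟨n - 2, by omega⟩ with ha
  set b : Fin n := ⟨n - 1, by omega⟩ with hb
  have hab : a ≠ b := fun h => by
    have := congrArg Fin.val h
    simp [ha, hb] at this
    omega
  set e : Fin (n - 2) → Fin n := fun i => ⟨(i : ℕ), by have := i.isLt; omega⟩ with he
  have hea : ∀ i, e i ≠ a := fun i h => by
    have hv := congrArg Fin.val h
    have := i.isLt
    simp [he, ha] at hv
    omega
  have heb : ∀ i, e i ≠ b := fun i h => by
    have hv := congrArg Fin.val h
    have := i.isLt
    simp [he, hb] at hv
    omega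
  have hee : ∀ i j : Fin (n - 2), i ≠ j → e i ≠ e j := fun i j hij h => by
    have hv := congrArg Fin.val h
    simp [he] at hv
    exact hij (Fin.ext hv)
  set f : Fin (n - 2) → alternatingGroup (Fin n) := fun i =>
    ⟨swap (e i) a * swap a b, by
      rw [mem_alternatingGroup, Equiv.Perm.sign_mul, sign_swap (hea i), sign_swap hab]
      norm_num⟩ with hf
  have hcond : ∀ r ∈ carmichaelRels n, FreeGroup.lift f r = 1 := by
    rintro r (⟨i, rfl⟩ | ⟨i, j, hij, rfl⟩)
    · rw [map_pow, FreeGroup.lift_apply_of]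
      exact Subtype.ext (by
        push_cast [hf]
        exact pow3 (hea i) (heb i) hab)
    · rw [map_pow, map_mul, FreeGroup.lift_apply_of, FreeGroup.lift_apply_of]
      exact Subtype.ext (by
        push_cast [hf]
        exact pairsq (hee i j hij) (hea i) (heb i) (hea j) (heb j) hab)
  set phi : Gn n →* alternatingGroup (Fin n) := PresentedGroup.toGroup hcond with hphi
  set psi : Gn n →* Perm (Fin n) := (alternatingGroup (Fin n)).subtype.comp phi with hpsi
  have hpsiof : ∀ i, psi (PresentedGroup.of i) = swap (e i) a * swap a b := by
    intro i
    rw [hpsi, MonoidHom.comp_apply, hphi, PresentedGroup.toGroup.of]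
    rfl
  have hsub : {σ : Perm (Fin n) | ∃ u, u ≠ a ∧ u ≠ b ∧ σ = swap u a * swap a b} ⊆
      (psi.range : Set (Perm (Fin n))) := by
    rintro σ ⟨u, hua, hub, rfl⟩
    have hu1 : (u : ℕ) ≠ n - 2 := fun h => hua (Fin.ext h)
    have hu2 : (u : ℕ) ≠ n - 1 := fun h => hub (Fin.ext h)
    have hu : (u : ℕ) < n - 2 := by have := u.isLt; omega
    refine ⟨PresentedGroup.of ⟨(u : ℕ), hu⟩, ?_⟩
    rw [hpsiof]
  have hclosure := closure_tc_eq_alternating a b hab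
  have hsurj : Function.Surjective phi := by
    intro σ
    have hσ : (σ : Perm (Fin n)) ∈ closure
        {τ : Perm (Fin n) | ∃ u, u ≠ a ∧ u ≠ b ∧ τ = swap u a * swap a b} := by
      rw [hclosure]; exact σ.2
    have := (Subgroup.closure_le psi.range).2 hsub hσ
    obtain ⟨g, hg⟩ := this
    refine ⟨g, Subtype.ext ?_⟩
    rw [← hg, hpsi]
    rfl
  have hnt : Nontrivial (Fin n) := Fin.nontrivial_iff_two_le.2 (by omega)
  have hcA : Nat.card (alternatingGroup (Fin n)) = n ! / 2 := by
    have h2 := two_mul_card_alternatingGroup (α := Fin n)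
    rw [Fintype.card_perm, Fintype.card_fin] at h2
    rw [Nat.card_eq_fintype_card]
    omega
  obtain ⟨hfin, hle⟩ := finite_and_card n hn
  have hge : Nat.card (alternatingGroup (Fin n)) ≤ Nat.card (Gn n) :=
    Nat.card_le_card_of_surjective phi hsurj
  have hbij : Function.Bijective phi :=
    (Nat.bijective_iff_surjective_and_card phi).2
      ⟨hsurj, le_antisymm (hle.trans hcA.symm.le) hge⟩
  exact ⟨MulEquiv.ofBijective phi hbij⟩

end Main
end CarAux

theorem carmichael_presentation_iso_alternatingGroup (n : ℕ) (hn : 3 ≤ n) :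
    Nonempty (PresentedGroup (carmichaelRels n) ≃* alternatingGroup (Fin n)) :=
  CarAux.main n hn
end

section
/- Let n ≥ 5 be an integer, let c_i = (i, i+1, i+2) ∈ A_n for 1 ≤ i ≤ n-2, and define v_i = c_{n-2}·c_{n-3}⋯c_{i+1}·c_i·c_{i+1}^{-1}⋯c_{n-3}^{-1}·c_{n-2}^{-1} for 1 ≤ i ≤ n-2 (so v_{n-2} = c_{n-2}). Then v_i^3 = 1 for all i, (v_i·v_j)^2 = 1 for all i ≠ j, and v_1, …, v_{n-2} generate A_n. -/
/-- The 3-cycle `(i, i+1, i+2)` in the symmetric group on `{1, …, n}` (identified with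
`Fin n` via `j ↦ j - 1`), defined for `1 ≤ i ≤ n - 2` (junk value `1` otherwise). -/
def threeCycle (n i : ℕ) : Equiv.Perm (Fin n) :=
  if h : 1 ≤ i ∧ i + 1 < n then
    Equiv.swap ⟨i - 1, by omega⟩ ⟨i + 1, h.2⟩ * Equiv.swap ⟨i - 1, by omega⟩ ⟨i, by omega⟩
  else 1

/-- The descending product `x_m · x_{m-1} ⋯ x_k` (equal to `1` when `k = m + 1`). -/
def descProd {G : Type*} [Monoid G] (x : ℕ → G) (m k : ℕ) : G :=
  (((List.range' k (m + 1 - k)).reverse).map x).prod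

/-- The element `vᵢ = c_{n-2} ⋯ c_{i+1} · cᵢ · c_{i+1}⁻¹ ⋯ c_{n-2}⁻¹`
(in particular `v_{n-2} = c_{n-2}`). -/
def vElem (n i : ℕ) : Equiv.Perm (Fin n) :=
  descProd (threeCycle n) (n - 2) (i + 1) * threeCycle n i *
    (descProd (threeCycle n) (n - 2) (i + 1))⁻¹

/-! `vᵢ` is the 3-cycle `(i, n-1, n)`: the prefix `c_{n-2} ⋯ c_{i+1}` sends `i` and `i+1` to
`n-1` and `n` and fixes `1, …, i-1`. Two 3-cycles `(a q r)` and `(b q r)` multiply to the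
involution `(a q)(b r)`, which gives the relations. For generation, `(a q r)` together with the
(odd) transposition `(q r)` yields every product `(x r)(y r)`, and every 3-cycle is a product of
two of these. -/

open Equiv Equiv.Perm

namespace Equiv.Perm

section
variable {α : Type*} [DecidableEq α]

theorem conj_swap_mul_swap (f : Perm α) (x y z : α) :
    f * (swap x z * swap x y) * f⁻¹ = swap (f x) (f z) * swap (f x) (f y) := by
  rw [swap_apply_apply, swap_apply_apply]
  group

theorem swap_mul_swap_mul_swap_mul_swap {a b q r : α} (h : [a, b, q, r].Nodup) :
    swap a r * swap a q * (swap b r * swap b q) = swap a q * swap b r := by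
  simp only [List.nodup_cons, List.mem_cons, List.not_mem_nil, not_or, List.nodup_nil] at h
  ext x
  simp only [Perm.mul_apply, swap_apply_def]
  split_ifs <;> grind

theorem swap_mul_swap_mul_swap_mul_swap_sq {a b q r : α} (h : [a, b, q, r].Nodup) :
    (swap a r * swap a q * (swap b r * swap b q)) ^ 2 = 1 := by
  have hcomm : Commute (swap a q) (swap b r) :=
    (disjoint_swap_swap (h.perm (.cons a (.swap q b [r])))).commute
  rw [swap_mul_swap_mul_swap_mul_swap h, hcomm.mul_pow, sq, sq,
    swap_mul_self, swap_mul_self, one_mul]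

theorem swap_mul_swap_eq_of_ne {x y z r : α} (hxy : x ≠ y) (hyz : y ≠ z)
    (hxr : x ≠ r) (hzr : z ≠ r) :
    swap x y * swap y z = swap y r * swap x r * (swap z r * swap y r) := by
  have h1 := swap_apply_apply (swap y r) x r
  have h2 := swap_apply_apply (swap y r) r z
  rw [swap_apply_of_ne_of_ne hxy hxr, swap_apply_right, swap_inv] at h1
  rw [swap_apply_of_ne_of_ne hyz.symm hzr, swap_apply_right, swap_inv] at h2
  rw [h1, h2, swap_comm r z]
  simp [mul_assoc]

variable {q r : α} {H : Subgroup (Perm α)}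

theorem swap_mul_swap_mem_of_forall_swap_mul_swap_mem (hqr : q ≠ r)
    (hH : ∀ a, a ≠ q → a ≠ r → swap a r * swap a q ∈ H) {x y : α} (hx : x ≠ r) (hy : y ≠ r) :
    swap x r * swap y r ∈ H := by
  have hmem : ∀ x, x ≠ r → swap x r * swap q r ∈ H := by
    intro x hx
    rcases eq_or_ne x q with rfl | hxq
    · rw [swap_mul_self]
      exact one_mem _
    have hconj := swap_mul_swap_mul_swap (Ne.symm hxq) hqr
    rw [swap_comm r q, swap_comm q x] at hconj
    have hinv : swap x r * swap q r = (swap x r * swap x q)⁻¹ := by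
      rw [mul_inv_rev, swap_inv, swap_inv, ← hconj, ← mul_assoc, ← mul_assoc, swap_mul_self,
        one_mul]
    rw [hinv]
    exact inv_mem (hH x hxq hx)
  simpa [mul_assoc] using mul_mem (hmem x hx) (inv_mem (hmem y hy))

variable [Fintype α]

theorem IsThreeCycle.mem_of_forall_swap_mul_swap_mem (hqr : q ≠ r)
    (hH : ∀ a, a ≠ q → a ≠ r → swap a r * swap a q ∈ H) {g : Perm α} (hg : IsThreeCycle g) :
    g ∈ H := by
  -- write `g = (a, g a)(g a, g² a)` with `g a = r` if `g` moves `r`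
  obtain ⟨a, ha, hga⟩ : ∃ a ∈ g.support, r ∉ g.support ∨ g a = r := by
    by_cases hr : r ∈ g.support
    · refine ⟨g⁻¹ r, ?_, Or.inr (by simp)⟩
      rwa [← support_inv, apply_mem_support, support_inv]
    · obtain ⟨a, ha⟩ := hg.isCycle.nonempty_support
      exact ⟨a, ha, Or.inl hr⟩
  have hnd := hg.nodup_iff_mem_support.2 ha
  simp only [List.nodup_cons, List.mem_cons, List.not_mem_nil, not_or, List.nodup_nil] at hnd
  obtain ⟨⟨h01, h02, -⟩, ⟨h12, -⟩, -⟩ := hnd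
  rw [hg.eq_swap_mul_swap_iff_mem_support.2 ha]
  rcases hga with hr | hr
  · have hne : ∀ x ∈ g.support, x ≠ r := fun x hx h => hr (h ▸ hx)
    have h1 : g a ∈ g.support := apply_mem_support.2 ha
    have h2 : g (g a) ∈ g.support := apply_mem_support.2 h1
    rw [swap_mul_swap_eq_of_ne h01 h12 (hne a ha) (hne _ h2)]
    exact mul_mem (swap_mul_swap_mem_of_forall_swap_mul_swap_mem hqr hH (hne _ h1) (hne a ha))
      (swap_mul_swap_mem_of_forall_swap_mul_swap_mem hqr hH (hne _ h2) (hne _ h1))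
  · rw [hr] at h01 h12
    rw [hr, swap_comm r]
    exact swap_mul_swap_mem_of_forall_swap_mul_swap_mem hqr hH h01 (Ne.symm h12)

theorem alternatingGroup_le_of_forall_swap_mul_swap_mem (hqr : q ≠ r)
    (hH : ∀ a, a ≠ q → a ≠ r → swap a r * swap a q ∈ H) : alternatingGroup α ≤ H := by
  rw [← closure_three_cycles_eq_alternating, Subgroup.closure_le]
  exact fun g hg => hg.mem_of_forall_swap_mul_swap_mem hqr hH

end

end Equiv.Perm

theorem descProd_self_add_one {G : Type*} [Monoid G] (x : ℕ → G) (m : ℕ) :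
    descProd x m (m + 1) = 1 := by
  simp [descProd]

theorem descProd_eq_descProd_add_one_mul {G : Type*} [Monoid G] (x : ℕ → G) {m k : ℕ}
    (h : k ≤ m) : descProd x m k = descProd x m (k + 1) * x k := by
  rw [descProd, descProd, show m + 1 - k = m + 1 - (k + 1) + 1 by omega, List.range'_succ]
  simp

theorem threeCycle_apply_val {n k : ℕ} (hk : 1 ≤ k) (hkn : k + 1 < n) (x : Fin n) :
    (threeCycle n k x : ℕ) =
      if x.val = k - 1 then k else if x.val = k then k + 1 else if x.val = k + 1 then k - 1
      else x := by
  rw [threeCycle, dif_pos ⟨hk, hkn⟩]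
  simp only [Perm.mul_apply, swap_apply_def, Fin.ext_iff, apply_ite Fin.val]
  split_ifs <;> omega

theorem descProd_threeCycle_apply {n k : ℕ} (hk : 2 ≤ k) (hkn : k ≤ n - 1) :
    (∀ x : Fin n, x.val + 2 ≤ k → descProd (threeCycle n) (n - 2) k x = x) ∧
    (∀ x : Fin n, x.val + 1 = k → (descProd (threeCycle n) (n - 2) k x : ℕ) = n - 2) ∧
    (∀ x : Fin n, x.val = k → (descProd (threeCycle n) (n - 2) k x : ℕ) = n - 1) := by
  induction hkn using Nat.decreasingInduction with
  | self =>
    rw [show n - 1 = n - 2 + 1 by omega, descProd_self_add_one]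
    refine ⟨fun x _ => rfl, fun x hx => ?_, fun x hx => ?_⟩ <;> simp only [Perm.one_apply] <;> omega
  | of_succ k hk' ih =>
    obtain ⟨ih_fix, ih_pen, ih_last⟩ := ih (by omega)
    rw [descProd_eq_descProd_add_one_mul _ (by omega)]
    have hc := threeCycle_apply_val (n := n) (k := k) (by omega) (by omega)
    refine ⟨fun x hx => ?_, fun x hx => ?_, fun x hx => ?_⟩ <;> rw [Perm.mul_apply]
    · rw [Fin.ext_iff.2 (show (threeCycle n k x : ℕ) = x by rw [hc]; split_ifs <;> omega)]
      exact ih_fix x (by omega)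
    · exact ih_pen _ (by rw [hc]; split_ifs <;> omega)
    · exact ih_last _ (by rw [hc]; split_ifs <;> omega)

theorem vElem_eq_swap_mul_swap {n i : ℕ} (hi : 1 ≤ i) (hin : i ≤ n - 2) :
    vElem n i =
      swap ⟨i - 1, by omega⟩ ⟨n - 1, by omega⟩ * swap ⟨i - 1, by omega⟩ ⟨n - 2, by omega⟩ := by
  obtain ⟨h_fix, h_pen, h_last⟩ :=
    descProd_threeCycle_apply (n := n) (k := i + 1) (by omega) (by omega)
  rw [vElem, threeCycle, dif_pos ⟨hi, by omega⟩, conj_swap_mul_swap,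
    h_fix ⟨i - 1, _⟩ (by dsimp only; omega)]
  congr 3 <;> apply Fin.ext
  · exact h_last _ rfl
  · exact h_pen ⟨i, _⟩ rfl

theorem vElem_isThreeCycle {n i : ℕ} (hi : 1 ≤ i) (hin : i ≤ n - 2) :
    IsThreeCycle (vElem n i) := by
  rw [vElem_eq_swap_mul_swap hi hin]
  exact isThreeCycle_swap_mul_swap_same (Fin.ne_of_val_ne (by dsimp only; omega))
    (Fin.ne_of_val_ne (by dsimp only; omega)) (Fin.ne_of_val_ne (by dsimp only; omega))

theorem vElem_satisfy_carmichael_relations_and_generate_general (n : ℕ) :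
    (∀ i, 1 ≤ i → i ≤ n - 2 → (vElem n i) ^ 3 = 1) ∧
    (∀ i j, 1 ≤ i → i ≤ n - 2 → 1 ≤ j → j ≤ n - 2 → i ≠ j →
      (vElem n i * vElem n j) ^ 2 = 1) ∧
    Subgroup.closure {g : Equiv.Perm (Fin n) | ∃ i, 1 ≤ i ∧ i ≤ n - 2 ∧ g = vElem n i} =
      alternatingGroup (Fin n) := by
  refine ⟨fun i hi hin => ?_, fun i j hi hin hj hjn hij => ?_, le_antisymm ?_ ?_⟩
  · rw [← (vElem_isThreeCycle hi hin).orderOf]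
    exact pow_orderOf_eq_one _
  · rw [vElem_eq_swap_mul_swap hi hin, vElem_eq_swap_mul_swap hj hjn]
    exact swap_mul_swap_mul_swap_mul_swap_sq (by
      simp only [List.nodup_cons, List.mem_cons, List.not_mem_nil, List.nodup_nil, Fin.ext_iff,
        or_false, not_or, not_false_eq_true, and_self, and_true]
      omega)
  · rw [Subgroup.closure_le]
    rintro _ ⟨i, hi, hin, rfl⟩
    exact (vElem_isThreeCycle hi hin).mem_alternatingGroup
  · rcases lt_or_ge n 2 with hn | hn
    · interval_cases n <;> exact fun g _ => Subsingleton.elim g 1 ▸ one_mem _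
    refine alternatingGroup_le_of_forall_swap_mul_swap_mem (q := ⟨n - 2, by omega⟩)
      (r := ⟨n - 1, by omega⟩) (Fin.ne_of_val_ne (by dsimp only; omega)) fun a haq har => ?_
    have ha : a.val + 3 ≤ n := by
      have hq := Fin.val_ne_of_ne haq
      have hr := Fin.val_ne_of_ne har
      dsimp only at hq hr
      omega
    refine Subgroup.subset_closure ⟨a + 1, by omega, by omega, ?_⟩
    rw [vElem_eq_swap_mul_swap (by omega) (by omega)]
    rfl

theorem vElem_satisfy_carmichael_relations_and_generate (n : ℕ) (hn : 5 ≤ n) :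
    (∀ i, 1 ≤ i → i ≤ n - 2 → (vElem n i) ^ 3 = 1) ∧
    (∀ i j, 1 ≤ i → i ≤ n - 2 → 1 ≤ j → j ≤ n - 2 → i ≠ j →
      (vElem n i * vElem n j) ^ 2 = 1) ∧
    Subgroup.closure {g : Equiv.Perm (Fin n) | ∃ i, 1 ≤ i ∧ i ≤ n - 2 ∧ g = vElem n i} =
      alternatingGroup (Fin n) :=
  vElem_satisfy_carmichael_relations_and_generate_general n
end
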